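/- Let Δ be a real number with 2 ≤ Δ ≤ 6. Then for every y = (y₁, y₂) ∈ ℝ² the 2×2 symmetric matrix [[3y₁² + ½Δy₂², Δy₁y₂], [Δy₁y₂, 3y₂² + ½Δy₁²]] is positive semidefinite. -/

import Mathlib

open Matrix

/-!
A symmetric `2 × 2` matrix with nonnegative diagonal and nonnegative determinant is positive
semidefinite. Here the diagonal is nonnegative because `Δ ≥ 0`, and the determinant is
`(3/2) Δ (y₁² - y₂²)² + (3/4) (6 - Δ) (Δ + 2) y₁² y₂²`, which is nonnegative for `0 ≤ Δ ≤ 6`.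
-/

namespace Matrix

variable {R : Type*} [CommRing R] [LinearOrder R] [IsStrictOrderedRing R] [StarRing R]
  [TrivialStar R] [StarOrderedRing R]

theorem posSemidef_fin_two_of_sq_le {a b c : R} (ha : 0 ≤ a) (hc : 0 ≤ c)
    (hdet : b ^ 2 ≤ a * c) : !![a, b; b, c].PosSemidef := by
  rw [posSemidef_iff_dotProduct_mulVec]
  refine ⟨by ext i j; fin_cases i <;> fin_cases j <;> simp, fun x => ?_⟩
  simp only [dotProduct, mulVec, Fin.sum_univ_two, cons_val_zero, cons_val_one, of_apply,
    cons_val', empty_val', cons_val_fin_one, star_trivial]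
  set q := x 0 * (a * x 0 + b * x 1) + x 1 * (b * x 0 + c * x 1)
  have hsos : (a + c) * q = (a * x 0 + b * x 1) ^ 2 + (b * x 0 + c * x 1) ^ 2
      + (a * c - b ^ 2) * (x 0 ^ 2 + x 1 ^ 2) := by ring
  rcases (add_nonneg ha hc).eq_or_lt with hac | hac
  · have ha0 : a = 0 := by linarith
    have hc0 : c = 0 := by linarith
    have hb0 : b = 0 := by
      rw [ha0, zero_mul] at hdet
      exact pow_eq_zero_iff two_ne_zero |>.1 (le_antisymm hdet (sq_nonneg b))
    simp [q, ha0, hb0, hc0]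
  · refine nonneg_of_mul_nonneg_right ?_ hac
    rw [hsos]
    positivity

end Matrix

theorem H2_posSemidef (Δ : ℝ) (h2 : 2 ≤ Δ) (h6 : Δ ≤ 6) (y₁ y₂ : ℝ) :
    (!![3 * y₁ ^ 2 + (1 : ℝ) / 2 * Δ * y₂ ^ 2, Δ * y₁ * y₂;
        Δ * y₁ * y₂, 3 * y₂ ^ 2 + (1 : ℝ) / 2 * Δ * y₁ ^ 2]).PosSemidef := by
  have hΔ : 0 ≤ Δ := by linarith
  refine posSemidef_fin_two_of_sq_le (by positivity) (by positivity) ?_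
  have hdet : (3 * y₁ ^ 2 + 1 / 2 * Δ * y₂ ^ 2) * (3 * y₂ ^ 2 + 1 / 2 * Δ * y₁ ^ 2)
      - (Δ * y₁ * y₂) ^ 2 = 3 / 2 * Δ * (y₁ ^ 2 - y₂ ^ 2) ^ 2
        + 3 / 4 * ((6 - Δ) * (Δ + 2)) * (y₁ * y₂) ^ 2 := by ring
  have h6Δ : 0 ≤ 6 - Δ := by linarith
  rw [← sub_nonneg, hdet]
  positivity
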